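/- arXiv:2009.03493 — 4 statements merged into one kernel-verified Lean document; each statement's English description precedes it below -/
import Mathlib

section
/- Let x₁, …, xₙ be a basis of ℝⁿ which is α-reduced for some 1/4 < α < 1, and let x₁*, …, xₙ* be its Gram–Schmidt orthogonalization. Then for all indices 1 ≤ k ≤ j ≤ n, one has ‖x_k‖² ≤ (4/(4α − 1))^{j−1} · ‖x_j*‖². -/
/-!
The vectors `x*ᵢ` are pairwise orthogonal, so the Lovász condition (ii) together with
`|μ| ≤ 1/2` gives `‖x*ᵢ‖² ≤ β ‖x*ᵢ₊₁‖²` with `β = 4/(4α - 1)`, hence `‖x*ᵢ‖² ≤ β^(j-i) ‖x*ⱼ‖²`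
for `i ≤ j`. By Pythagoras `‖xₖ‖² = ‖x*ₖ‖² + ∑_{i<k} μₖᵢ² ‖x*ᵢ‖² ≤ (1 + ¼ ∑_{d=1}^{k} βᵈ) ‖x*ₖ‖²`,
and since `β ≥ 4/3` the factor is at most `βᵏ`. Multiplying by `β^(j-k)` gives the claim.
-/

open Finset RealInnerProductSpace

section GramSchmidt

variable {E : Type*} [NormedAddCommGroup E] [InnerProductSpace ℝ E]

theorem norm_sum_sq_eq_sum_norm_sq {ι : Type*} {v : ι → E}
    (hv : Pairwise fun i j => ⟪v i, v j⟫ = 0) (s : Finset ι) :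
    ‖∑ i ∈ s, v i‖ ^ 2 = ∑ i ∈ s, ‖v i‖ ^ 2 := by
  classical
  induction s using Finset.induction_on with
  | empty => simp
  | insert a s ha ih =>
    have horth : ⟪v a, ∑ i ∈ s, v i⟫ = 0 :=
      (inner_sum _ _ _).trans <| sum_eq_zero fun i hi => hv (ne_of_mem_of_not_mem hi ha).symm
    rw [sum_insert ha, sum_insert ha, ← ih, norm_add_sq_real, horth]
    ring

variable {ι : Type*} [Fintype ι] [LinearOrder ι] {x xstar : ι → E} {μ : ι → ι → ℝ}

theorem pairwise_inner_eq_zero_of_gramSchmidt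
    (hμ : ∀ j k, μ j k = ⟪x j, xstar k⟫ / ‖xstar k‖ ^ 2)
    (hgs : ∀ j, xstar j = x j - ∑ k ∈ univ.filter (· < j), μ j k • xstar k) :
    Pairwise fun i j => ⟪xstar i, xstar j⟫ = 0 := by
  have hlt : ∀ j k, k < j → ⟪xstar k, xstar j⟫ = 0 := by
    intro j
    induction j using WellFoundedLT.induction with
    | _ j ih =>
      have orth : ∀ k i, k < j → i < j → i ≠ k → ⟪xstar k, xstar i⟫ = 0 := by
        intro k i hk hi hik
        rcases hik.lt_or_gt with h | h
        · rw [real_inner_comm]; exact ih k hk i h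
        · exact ih i hi k h
      have hcoeff : ∀ k, μ j k * ‖xstar k‖ ^ 2 = ⟪xstar k, x j⟫ := by
        intro k
        rcases eq_or_ne (xstar k) 0 with h0 | h0
        · simp [h0]
        · rw [hμ, div_mul_cancel₀ _ (by positivity), real_inner_comm]
      intro k hk
      have hk' : k ∈ univ.filter (· < j) := by simpa using hk
      rw [hgs j, inner_sub_right, inner_sum, sum_eq_single_of_mem k hk', real_inner_smul_right,
        real_inner_self_eq_norm_sq, hcoeff, sub_self]
      intro i hi hik
      rw [real_inner_smul_right, orth k i hk (by simpa using hi) hik, mul_zero]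
  intro i j hij
  rcases hij.lt_or_gt with h | h
  · exact hlt j i h
  · rw [real_inner_comm]; exact hlt i j h

theorem norm_sq_eq_of_gramSchmidt (horth : Pairwise fun i j => ⟪xstar i, xstar j⟫ = 0)
    (hgs : ∀ j, xstar j = x j - ∑ k ∈ univ.filter (· < j), μ j k • xstar k) (j : ι) :
    ‖x j‖ ^ 2 = ‖xstar j‖ ^ 2 + ∑ k ∈ univ.filter (· < j), μ j k ^ 2 * ‖xstar k‖ ^ 2 := by
  have hsmul : Pairwise fun k l => ⟪μ j k • xstar k, μ j l • xstar l⟫ = 0 := fun k l hkl => by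
    dsimp only
    rw [real_inner_smul_left, real_inner_smul_right, horth hkl, mul_zero, mul_zero]
  have hcross : ⟪xstar j, ∑ k ∈ univ.filter (· < j), μ j k • xstar k⟫ = 0 := by
    refine (inner_sum _ _ _).trans <| sum_eq_zero fun k hk => ?_
    rw [real_inner_smul_right, horth (ne_of_gt (by simpa using hk)), mul_zero]
  rw [← sub_add_cancel (x j) (∑ k ∈ _, _), ← hgs, norm_add_sq_real, hcross,
    norm_sum_sq_eq_sum_norm_sq hsmul]
  simp only [norm_smul, mul_pow, Real.norm_eq_abs, sq_abs]
  ring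

end GramSchmidt

theorem norm_sq_le_of_lovasz {E : Type*} [NormedAddCommGroup E] [InnerProductSpace ℝ E]
    {a b : E} {c α : ℝ} (hα : 1 / 4 < α) (hab : ⟪a, b⟫ = 0) (hc : |c| ≤ 1 / 2)
    (h : α * ‖a‖ ^ 2 ≤ ‖b + c • a‖ ^ 2) : ‖a‖ ^ 2 ≤ 4 / (4 * α - 1) * ‖b‖ ^ 2 := by
  have hpyth : ‖b + c • a‖ ^ 2 = ‖b‖ ^ 2 + c ^ 2 * ‖a‖ ^ 2 := by
    rw [norm_add_sq_real, real_inner_smul_right, real_inner_comm, hab, norm_smul, mul_pow,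
      Real.norm_eq_abs, sq_abs]
    ring
  have hc2 : c ^ 2 ≤ 1 / 4 := by nlinarith [abs_nonneg c, sq_abs c]
  rw [div_mul_eq_mul_div, le_div_iff₀ (by linarith)]
  nlinarith [sq_nonneg ‖a‖]

theorem Fin.le_pow_mul_of_le_mul_succ {n : ℕ} {f : Fin n → ℝ} {β : ℝ} (hβ : 0 ≤ β)
    (hf : ∀ i j : Fin n, (i : ℕ) + 1 = j → f i ≤ β * f j) {k j : Fin n} (hkj : k ≤ j) :
    f k ≤ β ^ ((j : ℕ) - k) * f j := by
  obtain ⟨d, hd⟩ := Nat.exists_eq_add_of_le (Fin.le_def.mp hkj)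
  induction d generalizing j with
  | zero => simp [Fin.ext hd.symm]
  | succ d ih =>
    set i : Fin n := ⟨k + d, by omega⟩
    calc f k ≤ β ^ d * f i := by simpa [i] using ih (j := i) (Fin.le_def.mpr (by simp [i])) rfl
      _ ≤ β ^ d * (β * f j) := by gcongr; exact hf i j (by simp [i]; omega)
      _ = β ^ ((j : ℕ) - k) * f j := by rw [hd, Nat.add_sub_cancel_left, pow_succ]; ring

theorem Fin.sum_filter_lt_eq_sum_range {M : Type*} [AddCommMonoid M] {n : ℕ} (k : Fin n)
    (f : ℕ → M) : ∑ i ∈ univ.filter (· < k), f i = ∑ m ∈ range k, f m := by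
  rw [filter_gt_eq_Iio, ← Nat.Iio_eq_range, ← Fin.map_valEmbedding_Iio, sum_map]
  rfl

theorem one_add_sum_range_pow_succ_div_four_le {β : ℝ} (hβ : 4 / 3 ≤ β) (N : ℕ) :
    1 + (∑ m ∈ range N, β ^ (m + 1)) / 4 ≤ β ^ N := by
  induction N with
  | zero => simp
  | succ N ih =>
    have hpow : 0 ≤ β ^ N := by positivity
    rw [sum_range_succ, pow_succ]
    nlinarith

theorem norm_sq_le_pow_mul_norm_sq_of_gramSchmidt {E : Type*} [NormedAddCommGroup E]
    [InnerProductSpace ℝ E] {n : ℕ} {x xstar : Fin n → E} {μ : Fin n → Fin n → ℝ} {β : ℝ}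
    (hβ : 4 / 3 ≤ β) (horth : Pairwise fun i j => ⟪xstar i, xstar j⟫ = 0)
    (hgs : ∀ j, xstar j = x j - ∑ k ∈ univ.filter (· < j), μ j k • xstar k)
    (hμ : ∀ j k, k < j → |μ j k| ≤ 1 / 2)
    (hchain : ∀ i j : Fin n, i ≤ j → ‖xstar i‖ ^ 2 ≤ β ^ ((j : ℕ) - i) * ‖xstar j‖ ^ 2)
    (k : Fin n) : ‖x k‖ ^ 2 ≤ β ^ (k : ℕ) * ‖xstar k‖ ^ 2 := by
  have hterm : ∀ i ∈ univ.filter (· < k),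
      μ k i ^ 2 * ‖xstar i‖ ^ 2 ≤ β ^ ((k : ℕ) - i) / 4 * ‖xstar k‖ ^ 2 := by
    intro i hi
    have hik : i < k := by simpa using hi
    have hμ2 : μ k i ^ 2 ≤ 1 / 4 := by nlinarith [hμ k i hik, abs_nonneg (μ k i), sq_abs (μ k i)]
    calc μ k i ^ 2 * ‖xstar i‖ ^ 2 ≤ 1 / 4 * (β ^ ((k : ℕ) - i) * ‖xstar k‖ ^ 2) :=
          mul_le_mul hμ2 (hchain i k hik.le) (by positivity) (by norm_num)
      _ = β ^ ((k : ℕ) - i) / 4 * ‖xstar k‖ ^ 2 := by ring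
  have hreflect : ∑ m ∈ range k, β ^ ((k : ℕ) - m) = ∑ m ∈ range k, β ^ (m + 1) := by
    rw [← sum_range_reflect]
    refine sum_congr rfl fun m hm => ?_
    rw [mem_range] at hm
    congr 1
    omega
  calc ‖x k‖ ^ 2
      = ‖xstar k‖ ^ 2 + ∑ i ∈ univ.filter (· < k), μ k i ^ 2 * ‖xstar i‖ ^ 2 :=
        norm_sq_eq_of_gramSchmidt horth hgs k
    _ ≤ ‖xstar k‖ ^ 2 + ∑ i ∈ univ.filter (· < k), β ^ ((k : ℕ) - i) / 4 * ‖xstar k‖ ^ 2 :=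
        add_le_add_right (sum_le_sum hterm) _
    _ = (1 + (∑ m ∈ range k, β ^ (m + 1)) / 4) * ‖xstar k‖ ^ 2 := by
        rw [Fin.sum_filter_lt_eq_sum_range k fun m => β ^ ((k : ℕ) - m) / 4 * ‖xstar k‖ ^ 2,
          ← sum_mul, ← sum_div, hreflect]
        ring
    _ ≤ β ^ (k : ℕ) * ‖xstar k‖ ^ 2 := by
        gcongr; exact one_add_sum_range_pow_succ_div_four_le hβ k

-- Zero-based indices: the exponent `j - 1` of the informal statement is `(j : ℕ)` here.
theorem statement5_general (n : ℕ) (α : ℝ) (hα : 1 / 4 < α) (hα1 : α < 1)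
    (x : Fin n → EuclideanSpace ℝ (Fin n))
    (xstar : Fin n → EuclideanSpace ℝ (Fin n))
    (μ : Fin n → Fin n → ℝ)
    (hμ : ∀ j k : Fin n, μ j k = (inner ℝ (x j) (xstar k) : ℝ) / ‖xstar k‖ ^ 2)
    (hgs : ∀ j : Fin n,
      xstar j = x j - ∑ k ∈ Finset.univ.filter (· < j), μ j k • xstar k)
    (hred1 : ∀ j k : Fin n, k < j → |μ j k| ≤ 1 / 2)
    (hred2 : ∀ i j : Fin n, (i : ℕ) + 1 = (j : ℕ) →
      α * ‖xstar i‖ ^ 2 ≤ ‖xstar j + μ j i • xstar i‖ ^ 2) :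
    ∀ k j : Fin n, k ≤ j →
      ‖x k‖ ^ 2 ≤ (4 / (4 * α - 1)) ^ (j : ℕ) * ‖xstar j‖ ^ 2 := by
  intro k j hkj
  set β := 4 / (4 * α - 1)
  have hβ : 4 / 3 ≤ β := by rw [div_le_div_iff₀ (by norm_num) (by linarith)]; linarith
  have horth := pairwise_inner_eq_zero_of_gramSchmidt hμ hgs
  have hchain : ∀ i j : Fin n, i ≤ j → ‖xstar i‖ ^ 2 ≤ β ^ ((j : ℕ) - i) * ‖xstar j‖ ^ 2 :=
    fun i j => Fin.le_pow_mul_of_le_mul_succ (by positivity) fun i j hij =>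
      have hlt : i < j := Fin.lt_def.mpr (by omega)
      norm_sq_le_of_lovasz hα (horth hlt.ne) (hred1 j i hlt) (hred2 i j hij)
  calc ‖x k‖ ^ 2 ≤ β ^ (k : ℕ) * ‖xstar k‖ ^ 2 :=
        norm_sq_le_pow_mul_norm_sq_of_gramSchmidt hβ horth hgs hred1 hchain k
    _ ≤ β ^ (k : ℕ) * (β ^ ((j : ℕ) - k) * ‖xstar j‖ ^ 2) := by gcongr; exact hchain k j hkj
    _ = β ^ (j : ℕ) * ‖xstar j‖ ^ 2 := by
        rw [← mul_assoc, ← pow_add, Nat.add_sub_cancel' (Fin.le_def.mp hkj)]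

/-- Property (i) of LLL-reduced bases: if `x₁, …, xₙ` is an α-reduced basis of
ℝⁿ with Gram–Schmidt orthogonalization `x₁*, …, xₙ*`, then
`‖x k‖² ≤ (4/(4α-1))^(j-1) ‖x j*‖²` for all `k ≤ j`.  (Zero-based indexing:
the exponent `j - 1` of the 1-based statement becomes `(j : ℕ)`.) -/
theorem statement5 (n : ℕ) (α : ℝ) (hα : 1 / 4 < α) (hα1 : α < 1)
    (x : Fin n → EuclideanSpace ℝ (Fin n))
    (hx_indep : LinearIndependent ℝ x)
    (hx_span : Submodule.span ℝ (Set.range x) = ⊤)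
    (xstar : Fin n → EuclideanSpace ℝ (Fin n))
    (μ : Fin n → Fin n → ℝ)
    (hμ : ∀ j k : Fin n, μ j k = (inner ℝ (x j) (xstar k) : ℝ) / ‖xstar k‖ ^ 2)
    (hgs : ∀ j : Fin n,
      xstar j = x j - ∑ k ∈ Finset.univ.filter (· < j), μ j k • xstar k)
    (hred1 : ∀ j k : Fin n, k < j → |μ j k| ≤ 1 / 2)
    (hred2 : ∀ i j : Fin n, (i : ℕ) + 1 = (j : ℕ) →
      α * ‖xstar i‖ ^ 2 ≤ ‖xstar j + μ j i • xstar i‖ ^ 2) :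
    ∀ k j : Fin n, k ≤ j →
      ‖x k‖ ^ 2 ≤ (4 / (4 * α - 1)) ^ (j : ℕ) * ‖xstar j‖ ^ 2 :=
  statement5_general n α hα hα1 x xstar μ hμ hgs hred1 hred2
end

section
/- Given rational numbers x₁, x₂, …, xₙ and a rational number δ with 0 < δ < 1, there exist a positive integer b and integers a₁, …, aₙ such that |x_j − a_j/b| ≤ δ/b for every j = 1, …, n, and 1 ≤ b ≤ 2^{n(n+1)/4} · δ^{−n}. -/
/-!
Dirichlet's bound already suffices, with `b ≤ δ⁻ⁿ` in place of `2^(n(n+1)/4) δ⁻ⁿ`. The set of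
`(b, a) ∈ ℝ × ℝⁿ` with `|b| ≤ δ⁻ⁿ` and `|a_j - b x_j| ≤ δ` is the preimage of a box of volume
`2ⁿ⁺¹` under a shear of determinant one, so Minkowski's convex body theorem gives a nonzero integer
point in it. Since `δ < 1`, `b = 0` would force `a = 0`, so after a sign change `b > 0`.
-/

open MeasureTheory Module Submodule Matrix

theorem exists_ne_zero_int_mem_of_two_pow_le_volume {ι : Type*} [Fintype ι] [Nonempty ι]
    {s : Set (ι → ℝ)} (h_symm : ∀ v ∈ s, -v ∈ s) (h_conv : Convex ℝ s) (h_cpt : IsCompact s)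
    (h : 2 ^ Fintype.card ι ≤ volume s) :
    ∃ z : ι → ℤ, z ≠ 0 ∧ (fun i ↦ (z i : ℝ)) ∈ s := by
  have h_fund := ZSpan.isAddFundamentalDomain' (Pi.basisFun ℝ ι) volume
  have : Countable (span ℤ (Set.range (Pi.basisFun ℝ ι))).toAddSubgroup :=
    inferInstanceAs (Countable (span ℤ (Set.range (Pi.basisFun ℝ ι))))
  have : DiscreteTopology (span ℤ (Set.range (Pi.basisFun ℝ ι))).toAddSubgroup :=
    inferInstanceAs (DiscreteTopology (span ℤ (Set.range (Pi.basisFun ℝ ι))))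
  have h_vol : volume (ZSpan.fundamentalDomain (Pi.basisFun ℝ ι)) = 1 := by
    simp [ZSpan.fundamentalDomain_pi_basisFun, volume_pi_pi]
  obtain ⟨⟨v, hv⟩, hv0, hvs⟩ := exists_ne_zero_mem_lattice_of_measure_mul_two_pow_le_measure
    h_fund h_symm h_conv h_cpt (by rwa [h_vol, one_mul, finrank_fintype_fun_eq_card])
  rw [mem_toAddSubgroup, (Pi.basisFun ℝ ι).mem_span_iff_repr_mem ℤ] at hv
  choose z hz using hv
  obtain rfl : v = fun i ↦ (z i : ℝ) := funext fun i ↦ by simpa using (hz i).symm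
  exact ⟨z, fun hz0 ↦ hv0 (by ext i; simp [hz0]), hvs⟩

section Dirichlet

variable {ι : Type*} [Fintype ι] [DecidableEq ι]

def dirichletShear (x : ι → ℝ) : Matrix (Unit ⊕ ι) (Unit ⊕ ι) ℝ :=
  Matrix.fromBlocks 1 0 (-Matrix.of fun j _ ↦ x j) 1

theorem dirichletShear_mulVec (x : ι → ℝ) (v : Unit ⊕ ι → ℝ) :
    dirichletShear x *ᵥ v =
      Sum.elim (fun _ ↦ v (.inl ())) (fun j ↦ v (.inr j) - v (.inl ()) * x j) := by
  ext (_ | j) <;> simp [dirichletShear, mulVec, dotProduct, one_apply, mul_comm, sub_eq_neg_add]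

theorem det_toLin'_dirichletShear (x : ι → ℝ) :
    LinearMap.det (toLin' (dirichletShear x)) = 1 := by
  simp [LinearMap.det_toLin', dirichletShear]

def dirichletBody (x : ι → ℝ) (δ : ℝ) : Set (Unit ⊕ ι → ℝ) :=
  toLin' (dirichletShear x) ⁻¹'
    Set.Icc (-Sum.elim (fun _ ↦ δ⁻¹ ^ Fintype.card ι) fun _ ↦ δ)
      (Sum.elim (fun _ ↦ δ⁻¹ ^ Fintype.card ι) fun _ ↦ δ)

theorem mem_dirichletBody {x : ι → ℝ} {δ : ℝ} {v : Unit ⊕ ι → ℝ} :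
    v ∈ dirichletBody x δ ↔
      |v (.inl ())| ≤ δ⁻¹ ^ Fintype.card ι ∧ ∀ j, |v (.inr j) - v (.inl ()) * x j| ≤ δ := by
  simp only [dirichletBody, Set.mem_preimage, toLin'_apply, dirichletShear_mulVec,
    ← Set.pi_univ_Icc, Set.mem_univ_pi, Sum.forall, Sum.elim_inl, Sum.elim_inr, Pi.neg_apply,
    Set.mem_Icc, abs_le, forall_const]

theorem neg_mem_dirichletBody {x : ι → ℝ} {δ : ℝ} {v : Unit ⊕ ι → ℝ}
    (hv : v ∈ dirichletBody x δ) : -v ∈ dirichletBody x δ := by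
  rw [mem_dirichletBody] at hv ⊢
  simpa only [Pi.neg_apply, abs_neg, neg_mul, neg_sub_neg, abs_sub_comm] using hv

theorem convex_dirichletBody (x : ι → ℝ) (δ : ℝ) : Convex ℝ (dirichletBody x δ) :=
  (convex_Icc _ _).linear_preimage _

theorem isCompact_dirichletBody (x : ι → ℝ) (δ : ℝ) : IsCompact (dirichletBody x δ) :=
  let e := (LinearMap.equivOfDetNeZero _
    (ne_of_eq_of_ne (det_toLin'_dirichletShear x) one_ne_zero)).toContinuousLinearEquiv
  e.toHomeomorph.isCompact_preimage.2 isCompact_Icc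

theorem volume_dirichletBody (x : ι → ℝ) {δ : ℝ} (hδ : 0 < δ) :
    volume (dirichletBody x δ) = 2 ^ Fintype.card (Unit ⊕ ι) := by
  rw [dirichletBody, Measure.addHaar_preimage_linearMap _
    (ne_of_eq_of_ne (det_toLin'_dirichletShear x) one_ne_zero), det_toLin'_dirichletShear,
    Real.volume_Icc_pi]
  simp only [inv_one, abs_one, ENNReal.ofReal_one, one_mul, Fintype.prod_sum_type, Sum.elim_inl,
    Sum.elim_inr, Pi.neg_apply, sub_neg_eq_add, Finset.univ_unique, Finset.card_singleton,
    Finset.prod_const, Finset.card_univ, Fintype.card_sum, Fintype.card_unit, pow_one]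
  have h_side : (δ⁻¹ ^ Fintype.card ι + δ⁻¹ ^ Fintype.card ι) * (δ + δ) ^ Fintype.card ι =
      2 ^ (1 + Fintype.card ι) := by
    rw [inv_pow]
    field_simp
    ring
  rw [← ENNReal.ofReal_pow (by positivity), ← ENNReal.ofReal_mul (by positivity), h_side,
    ENNReal.ofReal_pow zero_le_two, ENNReal.ofReal_ofNat]

theorem exists_int_mem_dirichletBody (x : ι → ℝ) {δ : ℝ} (hδ0 : 0 < δ) (hδ1 : δ < 1) :
    ∃ z : Unit ⊕ ι → ℤ, 0 < z (.inl ()) ∧ (fun i ↦ (z i : ℝ)) ∈ dirichletBody x δ := by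
  obtain ⟨z, hz0, hz⟩ :=
    exists_ne_zero_int_mem_of_two_pow_le_volume (fun _ ↦ neg_mem_dirichletBody)
      (convex_dirichletBody x δ) (isCompact_dirichletBody x δ) (volume_dirichletBody x hδ0).ge
  have hb : z (.inl ()) ≠ 0 := by
    intro hb
    refine hz0 (funext ?_)
    rintro (⟨⟩ | j)
    · exact hb
    · have hj := (mem_dirichletBody.1 hz).2 j
      rw [hb, Int.cast_zero, zero_mul, sub_zero] at hj
      exact Int.abs_lt_one_iff.1 (by exact_mod_cast hj.trans_lt hδ1)
  rcases hb.lt_or_gt with hneg | hpos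
  · refine ⟨-z, by simpa using hneg, ?_⟩
    simpa only [Pi.neg_def, Pi.neg_apply, Int.cast_neg] using neg_mem_dirichletBody hz
  · exact ⟨z, hpos, hz⟩

end Dirichlet

theorem exists_int_abs_mul_sub_le {ι : Type*} [Fintype ι] (x : ι → ℝ) {δ : ℝ} (hδ0 : 0 < δ)
    (hδ1 : δ < 1) :
    ∃ (b : ℤ) (a : ι → ℤ), 0 < b ∧ (b : ℝ) ≤ δ⁻¹ ^ Fintype.card ι ∧
      ∀ j, |b * x j - a j| ≤ δ := by
  classical
  obtain ⟨z, hz0, hz⟩ := exists_int_mem_dirichletBody x hδ0 hδ1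
  obtain ⟨hb, ha⟩ := mem_dirichletBody.1 hz
  exact ⟨z (.inl ()), fun j ↦ z (.inr j), hz0, (le_abs_self _).trans hb,
    fun j ↦ by rw [abs_sub_comm]; exact ha j⟩

/-- The LLL simultaneous Diophantine approximation theorem (existence part):
given rationals `x₁, …, xₙ` and `0 < δ < 1`, there are `b ∈ ℕ`, `a₁, …, aₙ ∈ ℤ`
with `|x j - a j / b| ≤ δ / b` for all `j` and `1 ≤ b ≤ 2^(n(n+1)/4) δ^(-n)`. -/
theorem statement8 (n : ℕ) (x : Fin n → ℚ) (δ : ℚ) (hδ0 : 0 < δ) (hδ1 : δ < 1) :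
    ∃ (b : ℤ) (a : Fin n → ℤ), 1 ≤ b ∧
      (b : ℝ) ≤ 2 ^ ((n : ℝ) * ((n : ℝ) + 1) / 4) * (δ : ℝ) ^ (-(n : ℝ)) ∧
      ∀ j : Fin n, |(x j : ℝ) - (a j : ℝ) / (b : ℝ)| ≤ (δ : ℝ) / (b : ℝ) := by
  have hδ0' : (0 : ℝ) < δ := by exact_mod_cast hδ0
  obtain ⟨b, a, hb, hbδ, hab⟩ :=
    exists_int_abs_mul_sub_le (fun j ↦ (x j : ℝ)) hδ0' (by exact_mod_cast hδ1)
  have hb' : (0 : ℝ) < b := by exact_mod_cast hb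
  refine ⟨b, a, hb, ?_, fun j ↦ ?_⟩
  · calc (b : ℝ) ≤ (δ : ℝ)⁻¹ ^ n := by simpa only [Fintype.card_fin] using hbδ
      _ = (δ : ℝ) ^ (-(n : ℝ)) := by rw [Real.rpow_neg hδ0'.le, Real.rpow_natCast, inv_pow]
      _ ≤ _ := le_mul_of_one_le_left (by positivity) (Real.one_le_rpow one_le_two (by positivity))
  · rw [sub_div' hb'.ne', abs_div, abs_of_pos hb', mul_comm]
    exact div_le_div_of_nonneg_right (hab j) hb'.le
end

section
/- For every ε > 0 there exists a nonlattice Dirichlet polynomial of the form f(s) = 1 − m₁ rˢ − m₂ r^{α₂ s} − ⋯ − m_{N−1} r^{α_{N−1} s} − r^{α_N s}, with 0 < r < 1, m₁, …, m_{N−1} > 0 and 1 = α₁ < α₂ < ⋯ < α_N (with some α_j irrational), whose LSA constant C satisfies 0 < (32π)^{−1} − C < ε. In other words, the LSA constant of Dirichlet polynomials of this form can be made arbitrarily close to, but strictly less than, 1/(32π). -/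
/-! Take `N = 2`, `r = 1/2`, `m = (t, 1)` and `α = (1, 2 + t)` with `t > 0` irrational. The LSA
exponent does not depend on `r`, and the constant becomes
`C(t) = (1 + t)/(2π) · (2 + t)^(-2(2 + t))`. This is continuous with `C(0) = 1/(32π)`, and for
`t > 0` it is strictly smaller, because `(2 + t)^(-2(2 + t)) < (2 + t)^(-4)` and
`32 (1 + t) < 2 (2 + t)^4`. Small irrational `t` therefore does the job. -/

open Real

noncomputable def lsaConstantTwoTerm (t : ℝ) : ℝ :=
  (1 + t) / (2 * π) * (2 + t) ^ (-(2 * (2 + t)))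

lemma continuousAt_lsaConstantTwoTerm_zero : ContinuousAt lsaConstantTwoTerm 0 := by
  unfold lsaConstantTwoTerm
  refine ContinuousAt.mul (by fun_prop) (ContinuousAt.rpow (by fun_prop) (by fun_prop) ?_)
  norm_num

lemma lsaConstantTwoTerm_zero : lsaConstantTwoTerm 0 = 1 / (32 * π) := by
  rw [lsaConstantTwoTerm, show -(2 * (2 + (0 : ℝ))) = ((-4 : ℤ) : ℝ) by norm_num,
    Real.rpow_intCast]
  norm_num
  ring

lemma lsaConstantTwoTerm_lt {t : ℝ} (ht : 0 < t) : lsaConstantTwoTerm t < 1 / (32 * π) := by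
  have hpow : (2 + t) ^ (-(2 * (2 + t))) < 1 / (2 + t) ^ 4 := by
    rw [one_div, ← Real.rpow_natCast, ← Real.rpow_neg (by positivity)]
    exact (Real.rpow_lt_rpow_left_iff (by linarith)).mpr (by push_cast; linarith)
  have hpoly : 32 * (1 + t) < 2 * (2 + t) ^ 4 := by nlinarith [sq_nonneg t, sq_nonneg (t * t)]
  calc lsaConstantTwoTerm t < (1 + t) / (2 * π) * (1 / (2 + t) ^ 4) :=
        mul_lt_mul_of_pos_left hpow (by positivity)
    _ < 1 / (32 * π) := by
        rw [div_mul_div_comm, div_lt_div_iff₀ (by positivity) (by positivity)]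
        nlinarith [mul_lt_mul_of_pos_left hpoly pi_pos]

lemma exists_irrational_lsaConstantTwoTerm {ε : ℝ} (hε : 0 < ε) :
    ∃ t, Irrational t ∧ 0 < t ∧
      0 < 1 / (32 * π) - lsaConstantTwoTerm t ∧ 1 / (32 * π) - lsaConstantTwoTerm t < ε := by
  obtain ⟨δ, hδ, hclose⟩ := Metric.continuousAt_iff.mp continuousAt_lsaConstantTwoTerm_zero ε hε
  obtain ⟨t, ht_irr, ht_pos, htδ⟩ := exists_irrational_btwn hδ
  have hlt := lsaConstantTwoTerm_lt ht_pos
  have hdist := hclose (show dist t 0 < δ by rwa [Real.dist_eq, sub_zero, abs_of_pos ht_pos])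
  rw [Real.dist_eq, lsaConstantTwoTerm_zero, abs_of_neg (by linarith)] at hdist
  exact ⟨t, ht_irr, ht_pos, by linarith, by linarith⟩

lemma lsa_exponent_rpow {r : ℝ} (hr₀ : 0 < r) (hr₁ : r < 1) (a b c : ℝ) :
    -2 * (-log (r ^ a)) / min (-log (r ^ b)) (-log (r ^ a) - -log (r ^ c)) =
      -2 * a / min b (a - c) := by
  have hL : 0 < -log r := neg_pos.mpr (log_neg hr₀ hr₁)
  rw [log_rpow hr₀, log_rpow hr₀, log_rpow hr₀,
    show -(a * log r) - -(c * log r) = (a - c) * -log r by ring,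
    show -(b * log r) = b * -log r by ring, ← min_mul_of_nonneg _ _ hL.le,
    show -2 * -(a * log r) = -2 * a * -log r by ring]
  exact mul_div_mul_right _ _ hL.ne'

/-- The LSA constant of nonlattice Dirichlet polynomials of the special form
`f(s) = 1 - m₁ rˢ - ⋯ - m_{N-1} r^(α_{N-1} s) - r^(α_N s)` can be made
arbitrarily close to, but strictly less than, `1/(32π)`: for every `ε > 0`
there is such a polynomial whose LSA constant `C` (computed from the general
formula with weights `w j = -log (r^(α j))`) satisfies
`0 < 1/(32π) - C < ε`.  (Indices shifted to `Fin N`.) -/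
theorem statement11 : ∀ ε : ℝ, 0 < ε →
    ∃ (N : ℕ) (hN : 2 ≤ N) (r : ℝ) (m α : Fin N → ℝ),
      0 < r ∧ r < 1 ∧
      m ⟨N - 1, by omega⟩ = 1 ∧
      (∀ j : Fin N, j ≠ ⟨N - 1, by omega⟩ → 0 < m j) ∧
      α ⟨0, by omega⟩ = 1 ∧ StrictMono α ∧
      (∃ j : Fin N, Irrational (α j)) ∧
      ∃ C : ℝ,
        C = 1 / (2 * Real.pi) * (∑ j, |m j|) *
          (((1 + ∑ j, |m j|) / min 1 |m ⟨N - 1, by omega⟩|) ^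
            (-2 * (-Real.log (r ^ α ⟨N - 1, by omega⟩)) /
              min (-Real.log (r ^ α ⟨0, by omega⟩))
                ((-Real.log (r ^ α ⟨N - 1, by omega⟩)) -
                  (-Real.log (r ^ α ⟨N - 2, by omega⟩))))) ∧
        0 < 1 / (32 * Real.pi) - C ∧ 1 / (32 * Real.pi) - C < ε := by
  intro ε hε
  obtain ⟨t, ht_irr, ht_pos, hC_pos, hC_lt⟩ := exists_irrational_lsaConstantTwoTerm hε
  refine ⟨2, le_rfl, 1 / 2, ![t, 1], ![1, 2 + t], by norm_num, by norm_num, rfl, ?_, rfl, ?_,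
    ⟨1, by simpa using ht_irr.natCast_add 2⟩, lsaConstantTwoTerm t, ?_, hC_pos, hC_lt⟩
  · intro j hj
    fin_cases j
    · exact ht_pos
    · exact absurd rfl hj
  · refine Fin.strictMono_iff_lt_succ.mpr fun i => ?_
    fin_cases i
    exact (by linarith : (1 : ℝ) < 2 + t)
  · rw [lsa_exponent_rpow (by norm_num) (by norm_num)]
    simp only [show (⟨2 - 1, by omega⟩ : Fin 2) = 1 from rfl,
      show (⟨2 - 2, by omega⟩ : Fin 2) = 0 from rfl, Fin.sum_univ_two, Matrix.cons_val_zero,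
      Matrix.cons_val_one, abs_of_pos ht_pos, abs_one]
    rw [min_eq_left (by linarith : (1 : ℝ) ≤ 2 + t - 1), min_eq_left le_rfl, div_one, div_one,
      lsaConstantTwoTerm]
    ring_nf
end

section
/- Let f(s) = 1 − ∑_{j=1}^N m_j r_jˢ be a Dirichlet polynomial with 1 > r₁ > ⋯ > r_N > 0, m₁, …, m_N ∈ ℂ, and m_N ≠ 0. Let D and D_ℓ be the unique real numbers satisfying ∑_{j=1}^N |m_j| r_j^D = 1 and 1 + ∑_{j=1}^{N−1} |m_j| r_j^{D_ℓ} = |m_N| r_N^{D_ℓ}, respectively. Then every complex root s of f (i.e., every s ∈ ℂ with f(s) = 0) lies in the horizontally bounded vertical strip R = {z ∈ ℂ : D_ℓ ≤ Re z ≤ D}. -/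
/-!
Since `‖m * r ^ s‖ = ‖m‖ * r ^ (re s)`, a root `s` forces `1 ≤ ∑ ‖m j‖ r j ^ (re s)` and
`‖m_N‖ r_N ^ (re s) ≤ 1 + ∑_{j<N} ‖m j‖ r j ^ (re s)`. Passing from the exponent `D` (resp. `D_ℓ`)
to `re s` rescales every term by at most `r₁ ^ (re s - D)` (resp. at least `r_N ^ (re s - D_ℓ)`),
which contradicts these inequalities when `re s > D` (resp. `re s < D_ℓ`).
-/

open Finset

lemma Complex.norm_mul_exp_mul_ofReal_log (a : ℂ) {r : ℝ} (hr : 0 < r) (s : ℂ) :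
    ‖a * Complex.exp (s * (Real.log r : ℝ))‖ = ‖a‖ * r ^ s.re := by
  rw [norm_mul, Complex.norm_exp, Complex.re_mul_ofReal, Real.rpow_def_of_pos hr, mul_comm s.re]

lemma Finset.norm_le_norm_add_sum_norm_erase {ι E : Type*} [SeminormedAddCommGroup E]
    [DecidableEq ι] {s : Finset ι} {z : ι → E} {w : E} {i : ι} (hi : i ∈ s)
    (h : ∑ j ∈ s, z j = w) : ‖z i‖ ≤ ‖w‖ + ∑ j ∈ s.erase i, ‖z j‖ := by
  have hzi : z i = w - ∑ j ∈ s.erase i, z j := by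
    rw [eq_sub_iff_add_eq, add_sum_erase s z hi, h]
  calc ‖z i‖ ≤ ‖w‖ + ‖∑ j ∈ s.erase i, z j‖ := hzi ▸ norm_sub_le _ _
    _ ≤ ‖w‖ + ∑ j ∈ s.erase i, ‖z j‖ := add_le_add_right (norm_sum_le _ _) _

lemma Finset.sum_mul_rpow_le_rpow_mul_sum {ι : Type*} {s : Finset ι} {a r : ι → ℝ}
    {ρ x D : ℝ} (ha : ∀ j ∈ s, 0 ≤ a j) (hr : ∀ j ∈ s, 0 < r j)
    (hρ : ∀ j ∈ s, r j ^ (x - D) ≤ ρ ^ (x - D)) :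
    ∑ j ∈ s, a j * r j ^ x ≤ ρ ^ (x - D) * ∑ j ∈ s, a j * r j ^ D := by
  rw [mul_sum]
  refine sum_le_sum fun j hj => ?_
  calc a j * r j ^ x = r j ^ (x - D) * (a j * r j ^ D) := by
        rw [mul_left_comm, ← Real.rpow_add (hr j hj), sub_add_cancel]
    _ ≤ ρ ^ (x - D) * (a j * r j ^ D) :=
        mul_le_mul_of_nonneg_right (hρ j hj)
          (mul_nonneg (ha j hj) (Real.rpow_nonneg (hr j hj).le D))

section DirichletPolynomial

variable {ι : Type*} {s : Finset ι} {r : ι → ℝ} {m : ι → ℂ} {z : ℂ}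

lemma re_le_of_sum_mul_exp_eq_one {ρ D : ℝ} (hr : ∀ j ∈ s, 0 < r j) (hrρ : ∀ j ∈ s, r j ≤ ρ)
    (hρ : ρ < 1) (hD : ∑ j ∈ s, ‖m j‖ * r j ^ D = 1)
    (hz : ∑ j ∈ s, m j * Complex.exp (z * (Real.log (r j) : ℝ)) = 1) : z.re ≤ D := by
  by_contra! hDz
  have hρpos : 0 < ρ := by
    obtain ⟨j, hj⟩ : s.Nonempty := nonempty_of_sum_ne_zero (hD.trans_ne one_ne_zero)
    exact (hr j hj).trans_le (hrρ j hj)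
  have hgrow : 1 ≤ ∑ j ∈ s, ‖m j‖ * r j ^ z.re := by
    calc (1 : ℝ) = ‖∑ j ∈ s, m j * Complex.exp (z * (Real.log (r j) : ℝ))‖ := by
          rw [hz, norm_one]
      _ ≤ _ := norm_sum_le _ _
      _ = _ := sum_congr rfl fun j hj => Complex.norm_mul_exp_mul_ofReal_log _ (hr j hj) z
  have hshrink : ∑ j ∈ s, ‖m j‖ * r j ^ z.re ≤ ρ ^ (z.re - D) * 1 :=
    hD ▸ sum_mul_rpow_le_rpow_mul_sum (fun _ _ => norm_nonneg _) hr fun j hj =>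
      Real.rpow_le_rpow (hr j hj).le (hrρ j hj) (sub_nonneg.2 hDz.le)
  have hρD : ρ ^ (z.re - D) < 1 := Real.rpow_lt_one hρpos.le hρ (sub_pos.2 hDz)
  linarith

lemma le_re_of_sum_mul_exp_eq_one [DecidableEq ι] {i : ι} {Dl : ℝ} (hi : i ∈ s)
    (hr : ∀ j ∈ s, 0 < r j) (hri : ∀ j ∈ s, r i ≤ r j) (hri1 : r i < 1)
    (hDl : 1 + ∑ j ∈ s.erase i, ‖m j‖ * r j ^ Dl = ‖m i‖ * r i ^ Dl)
    (hz : ∑ j ∈ s, m j * Complex.exp (z * (Real.log (r j) : ℝ)) = 1) : Dl ≤ z.re := by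
  by_contra! hzDl
  have hdom : ‖m i‖ * r i ^ z.re ≤ 1 + ∑ j ∈ s.erase i, ‖m j‖ * r j ^ z.re := by
    have h := norm_le_norm_add_sum_norm_erase hi hz
    rwa [norm_one, Complex.norm_mul_exp_mul_ofReal_log _ (hr i hi),
      sum_congr rfl fun j hj => Complex.norm_mul_exp_mul_ofReal_log _
        (hr j (mem_of_mem_erase hj)) z] at h
  have hshrink : ∑ j ∈ s.erase i, ‖m j‖ * r j ^ z.re ≤
      r i ^ (z.re - Dl) * ∑ j ∈ s.erase i, ‖m j‖ * r j ^ Dl :=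
    sum_mul_rpow_le_rpow_mul_sum (fun _ _ => norm_nonneg _)
      (fun j hj => hr j (mem_of_mem_erase hj)) fun j hj =>
        Real.rpow_le_rpow_of_nonpos (hr i hi) (hri j (mem_of_mem_erase hj)) (by linarith)
  have hlast : ‖m i‖ * r i ^ z.re = r i ^ (z.re - Dl) * (‖m i‖ * r i ^ Dl) := by
    rw [mul_left_comm, ← Real.rpow_add (hr i hi), sub_add_cancel]
  have hgrow : 1 < r i ^ (z.re - Dl) :=
    Real.one_lt_rpow_of_pos_of_lt_one_of_neg (hr i hi) hri1 (sub_neg.2 hzDl)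
  rw [hlast, ← hDl, mul_one_add] at hdom
  linarith

end DirichletPolynomial

/-- All complex roots of a Dirichlet polynomial
`f(s) = 1 - ∑ m j (r j)ˢ` lie in the horizontally bounded vertical strip
`{z : D_ℓ ≤ Re z ≤ D}`, where `D` and `D_ℓ` are the unique reals with
`∑ |m j| (r j)^D = 1` and `1 + ∑_{j<N} |m j| (r j)^(D_ℓ) = |m N| (r N)^(D_ℓ)`.
(Indices shifted to `Fin N`: `N - 1` plays the role of the last index `N`.) -/
theorem statement17 (N : ℕ) (hN : 1 ≤ N) (r : Fin N → ℝ)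
    (hr1 : r ⟨0, by omega⟩ < 1) (hrpos : ∀ j, 0 < r j) (hanti : StrictAnti r)
    (m : Fin N → ℂ)
    (D Dl : ℝ)
    (hD : ∑ j, ‖m j‖ * r j ^ D = 1)
    (hDl : 1 + ∑ j ∈ Finset.univ.erase (⟨N - 1, by omega⟩ : Fin N),
             ‖m j‖ * r j ^ Dl
         = ‖m ⟨N - 1, by omega⟩‖ * r ⟨N - 1, by omega⟩ ^ Dl) :
    ∀ s : ℂ, (1 - ∑ j, m j * Complex.exp (s * (Real.log (r j) : ℝ))) = 0 →
      Dl ≤ s.re ∧ s.re ≤ D := by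
  intro s hf
  have hroot := (sub_eq_zero.1 hf).symm
  have hfirst : ∀ j, r j ≤ r ⟨0, by omega⟩ := fun j =>
    hanti.antitone (Fin.le_def.2 (Nat.zero_le _))
  have hlast : ∀ j, r ⟨N - 1, by omega⟩ ≤ r j := fun j =>
    hanti.antitone (Fin.le_def.2 (by simp only; omega))
  exact ⟨le_re_of_sum_mul_exp_eq_one (mem_univ _) (fun j _ => hrpos j) (fun j _ => hlast j)
      ((hlast _).trans_lt hr1) hDl hroot,
    re_le_of_sum_mul_exp_eq_one (fun j _ => hrpos j) (fun j _ => hfirst j) hr1 hD hroot⟩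
end
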